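/- Let p be an odd prime, and let i and j be positive integers with j odd, p not dividing j, pj ≤ 2i, and 2i < p². Set d = (pj-1)/2 and δ = (1-p)·∑_{s≥0} ⌊d/p^s⌋·p^s (a finite sum of integers, since ⌊d/p^s⌋ = 0 for p^s > d). Then 2i - 1 is not congruent to 2δ - 1 modulo 2p². -/

import Mathlib

/-!
Write `p = 2q + 1` and `j = 2m + 1`. Then `d = (pj - 1)/2 = q + pm` with `q, m < p`, so `d` has
base-`p` digits `q, m` and the sum `∑ ⌊d/p^s⌋ p^s` is just `d + mp`. Hence
`2δ - 1 = (1 - p)(2pj - p - 1) - 1 ≡ 2pj - 2 (mod p²)`, and a congruence `2i - 1 ≡ 2δ - 1` would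
make `p²` divide the odd number `2pj - 2i - 1`, whose absolute value is below `p²`
because `pj ≤ 2i < p²`.
-/

open Finset

theorem sum_range_div_pow_mul_pow_of_lt_sq {d p : ℕ} (hd : d < p ^ 2) :
    ∑ s ∈ range (d + 1), d / p ^ s * p ^ s = d + d / p * p := by
  rcases Nat.eq_zero_or_pos d with rfl | hd0
  · simp
  have hp : 0 < p := Nat.pos_of_ne_zero (by rintro rfl; simp at hd)
  have hvanish : ∀ s ≥ 2, d / p ^ s * p ^ s = 0 := fun s hs => by
    rw [Nat.div_eq_of_lt (hd.trans_le (Nat.pow_le_pow_right hp hs)), zero_mul]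
  rw [eventually_constant_sum hvanish (by omega : 2 ≤ d + 1)]
  simp [sum_range_succ]

theorem mul_sub_one_div_two_div_left {p j : ℕ} (hp : Odd p) (hj : Odd j) :
    (p * j - 1) / 2 / p = j / 2 := by
  obtain ⟨q, rfl⟩ := hp
  obtain ⟨m, rfl⟩ := hj
  have hd : ((2 * q + 1) * (2 * m + 1) - 1) / 2 = q + (2 * q + 1) * m := by
    rw [show (2 * q + 1) * (2 * m + 1) - 1 = 2 * (q + (2 * q + 1) * m) by ring_nf; omega]
    omega
  rw [hd, Nat.add_mul_div_left _ _ (by omega), Nat.div_eq_of_lt (by omega)]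
  omega

theorem two_mul_sum_range_div_pow_mul_pow {p j : ℕ} (hp : Odd p) (hj : Odd j)
    (hjp : p * j < p ^ 2) :
    2 * ∑ s ∈ range ((p * j - 1) / 2 + 1), ((((p * j - 1) / 2 / p ^ s : ℕ) : ℤ) * (p : ℤ) ^ s)
      = 2 * p * j - p - 1 := by
  have hd : (p * j - 1) / 2 < p ^ 2 := by omega
  have hsum := congrArg (Nat.cast : ℕ → ℤ) (sum_range_div_pow_mul_pow_of_lt_sq hd)
  simp only [Nat.cast_sum, Nat.cast_mul, Nat.cast_pow, Nat.cast_add] at hsum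
  rw [hsum, mul_sub_one_div_two_div_left hp hj]
  have hpj : 2 * ((p * j - 1) / 2) + 1 = p * j := by
    have := Nat.two_mul_div_two_add_one_of_odd (hp.mul hj); omega
  have hj2 : 2 * (j / 2) + 1 = j := Nat.two_mul_div_two_add_one_of_odd hj
  have hpjℤ : 2 * (((p * j - 1) / 2 : ℕ) : ℤ) + 1 = p * j := by exact_mod_cast hpj
  have hj2ℤ : 2 * ((j / 2 : ℕ) : ℤ) + 1 = j := by exact_mod_cast hj2
  linear_combination hpjℤ + p * hj2ℤ

theorem stmt11_general (p i j : ℕ) (hpodd : Odd p)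
    (hjodd : Odd j) (hpj : p * j ≤ 2 * i) (hlt : 2 * i < p ^ 2) :
    ¬ (2 * (i : ℤ) - 1 ≡
        2 * ((1 - (p : ℤ)) *
          ∑ s ∈ Finset.range ((p * j - 1) / 2 + 1),
            (((p * j - 1) / 2 / p ^ s : ℕ) : ℤ) * (p : ℤ) ^ s) - 1
        [ZMOD 2 * (p : ℤ) ^ 2]) := by
  intro h
  have hsum := two_mul_sum_range_div_pow_mul_pow hpodd hjodd (hpj.trans_lt hlt)
  have hδ : 2 * ((1 - (p : ℤ)) * ∑ s ∈ Finset.range ((p * j - 1) / 2 + 1),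
      (((p * j - 1) / 2 / p ^ s : ℕ) : ℤ) * (p : ℤ) ^ s) - 1
      = 2 * (p * j) - 2 + p ^ 2 * (1 - 2 * j) := by
    linear_combination (1 - (p : ℤ)) * hsum
  rw [hδ] at h
  have hmod : 2 * (i : ℤ) - 1 ≡ 2 * (p * j) - 2 [ZMOD p ^ 2] :=
    (h.of_dvd (dvd_mul_left _ _)).trans Int.modEq_add_fac_self
  have hpjℤ : (p : ℤ) * j ≤ 2 * i := by exact_mod_cast hpj
  have hltℤ : 2 * (i : ℤ) < p ^ 2 := by exact_mod_cast hlt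
  have hpj_pos : (0 : ℤ) < p * j := by exact_mod_cast (hpodd.mul hjodd).pos
  have hzero := Int.eq_zero_of_abs_lt_dvd hmod.dvd (abs_lt.mpr ⟨by linarith, by linarith⟩)
  omega

/-- For an odd prime `p` and positive integers `i`, `j` with `j` odd, `p ∤ j`,
`pj ≤ 2i`, and `2i < p²`: with `d = (pj-1)/2` and
`δ = (1-p)·∑_{s≥0} ⌊d/p^s⌋·p^s` (a finite sum; all nonzero terms occur for
`s ≤ d`), `2i - 1` is not congruent to `2δ - 1` modulo `2p²`. -/
theorem stmt11 (p i j : ℕ) (hp : p.Prime) (hpodd : Odd p) (hi : 0 < i) (hj : 0 < j)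
    (hjodd : Odd j) (hpdvd : ¬ p ∣ j) (hpj : p * j ≤ 2 * i) (hlt : 2 * i < p ^ 2) :
    ¬ (2 * (i : ℤ) - 1 ≡
        2 * ((1 - (p : ℤ)) *
          ∑ s ∈ Finset.range ((p * j - 1) / 2 + 1),
            (((p * j - 1) / 2 / p ^ s : ℕ) : ℤ) * (p : ℤ) ^ s) - 1
        [ZMOD 2 * (p : ℤ) ^ 2]) :=
  stmt11_general p i j hpodd hjodd hpj hlt
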